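/- arXiv:2504.20397 — 15 statements merged into one kernel-verified Lean document; each statement's English description precedes it below -/
import Mathlib

section
/- In a DR-semigroup S, for all x, y in S: D(xy) ≤ D(xD(y)) ≤ D(x) and R(xy) ≤ R(R(x)y) ≤ R(y), where ≤ is the natural order on projections. -/
class DRSemigroup (S : Type*) extends Semigroup S where
  D : S → S
  R : S → S
  dr1 : ∀ x : S, D x * x = x
  dr2 : ∀ x : S, x * R x = x
  dr3a : ∀ x : S, R (D x) = D x
  dr3b : ∀ x : S, D (R x) = R x
  dr4a : ∀ x y : S, D x * D (x * y) = D (x * y)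
  dr4b : ∀ x y : S, D (x * y) * D x = D (x * y)
  dr5a : ∀ x y : S, R y * R (x * y) = R (x * y)
  dr5b : ∀ x y : S, R (x * y) * R y = R (x * y)

namespace DRSemigroup

variable {S : Type*} [DRSemigroup S]

/-- `e` is a projection: an element of `D(S)`. -/
def IsProj (e : S) : Prop := ∃ t : S, D t = e

/-- The natural order on projections: `e ≤ f` iff `e = ef = fe`. -/
def ple (e f : S) : Prop := e = e * f ∧ e = f * e

/-- The ample conditions. -/
def Ample (S : Type*) [DRSemigroup S] : Prop :=
  (∀ (x e : S), IsProj e → x * e = D (x * e) * x) ∧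
  (∀ (x e : S), IsProj e → e * x = x * R (e * x))

/-- The order `≤_r`. -/
def leR (s t : S) : Prop := ple (D s) (D t) ∧ s = D s * t

/-- The order `≤_l`. -/
def leL (s t : S) : Prop := ple (R s) (R t) ∧ s = t * R s

/-- Bideterministic elements. -/
def Bidet (s : S) : Prop :=
  ∀ e : S, IsProj e → s * e = D (s * e) * s ∧ e * s = s * R (e * s)

end DRSemigroup

open DRSemigroup

theorem stmt_1 {S : Type*} [DRSemigroup S] (x y : S) :
    ple (DRSemigroup.D (x * y)) (DRSemigroup.D (x * DRSemigroup.D y)) ∧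
    ple (DRSemigroup.D (x * DRSemigroup.D y)) (DRSemigroup.D x) ∧
    ple (DRSemigroup.R (x * y)) (DRSemigroup.R (DRSemigroup.R x * y)) ∧
    ple (DRSemigroup.R (DRSemigroup.R x * y)) (DRSemigroup.R y) := by
  have hxy : x * DRSemigroup.D y * y = x * y := by
    rw [mul_assoc, DRSemigroup.dr1]
  have hxy' : x * (DRSemigroup.R x * y) = x * y := by
    rw [← mul_assoc, DRSemigroup.dr2]
  refine ⟨⟨?_, ?_⟩, ⟨?_, ?_⟩, ⟨?_, ?_⟩, ⟨?_, ?_⟩⟩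
  · conv_lhs => rw [← hxy, ← DRSemigroup.dr4b (x * DRSemigroup.D y) y, hxy]
  · conv_lhs => rw [← hxy, ← DRSemigroup.dr4a (x * DRSemigroup.D y) y, hxy]
  · exact (DRSemigroup.dr4b x (DRSemigroup.D y)).symm
  · exact (DRSemigroup.dr4a x (DRSemigroup.D y)).symm
  · conv_lhs => rw [← hxy', ← DRSemigroup.dr5b x (DRSemigroup.R x * y), hxy']
  · conv_lhs => rw [← hxy', ← DRSemigroup.dr5a x (DRSemigroup.R x * y), hxy']
  · exact (DRSemigroup.dr5b (DRSemigroup.R x) y).symm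
  · exact (DRSemigroup.dr5a (DRSemigroup.R x) y).symm
end

section
/- In a DR-semigroup S, for all x, y in S: D(xy) = D(D(xy)x) and R(xy) = R(yR(xy)). -/
open DRSemigroup

theorem stmt_2 {S : Type*} [DRSemigroup S] (x y : S) :
    DRSemigroup.D (x * y) = DRSemigroup.D (DRSemigroup.D (x * y) * x) ∧
    DRSemigroup.R (x * y) = DRSemigroup.R (y * DRSemigroup.R (x * y)) := by

  have dd : ∀ t : S, DRSemigroup.D (DRSemigroup.D t) = DRSemigroup.D t := fun t => by
    rw [← DRSemigroup.dr3a t, DRSemigroup.dr3b, DRSemigroup.dr3a]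
  have rr : ∀ t : S, DRSemigroup.R (DRSemigroup.R t) = DRSemigroup.R t := fun t => by
    rw [← DRSemigroup.dr3b t, DRSemigroup.dr3a, DRSemigroup.dr3b]
  constructor
  · have h1 : DRSemigroup.D (x * y) * DRSemigroup.D (DRSemigroup.D (x * y) * x)
        = DRSemigroup.D (DRSemigroup.D (x * y) * x) := by
      have := DRSemigroup.dr4a (DRSemigroup.D (x * y)) x
      rwa [dd] at this
    have h2 : DRSemigroup.D (x * y) * DRSemigroup.D (DRSemigroup.D (x * y) * x)
        = DRSemigroup.D (x * y) := by
      have := DRSemigroup.dr4b (DRSemigroup.D (x * y) * x) y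
      rwa [mul_assoc, DRSemigroup.dr1] at this
    rw [← h1, h2]
  · have h1 : DRSemigroup.R (y * DRSemigroup.R (x * y)) * DRSemigroup.R (x * y)
        = DRSemigroup.R (y * DRSemigroup.R (x * y)) := by
      have := DRSemigroup.dr5b y (DRSemigroup.R (x * y))
      rwa [rr] at this
    have h2 : DRSemigroup.R (y * DRSemigroup.R (x * y)) * DRSemigroup.R (x * y)
        = DRSemigroup.R (x * y) := by
      have := DRSemigroup.dr5a x (y * DRSemigroup.R (x * y))
      rwa [← mul_assoc, DRSemigroup.dr2] at this
    rw [← h1, h2]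
end

section
/- In a DR-semigroup S, if all projections commute with each other (ef = fe for all e, f in D(S)), then D(S) is closed under multiplication, i.e., ef ∈ D(S) for all e, f ∈ D(S); hence D(S) is a semilattice. -/
open DRSemigroup

theorem stmt_3 {S : Type*} [DRSemigroup S]
    (hcomm : ∀ e f : S, IsProj e → IsProj f → e * f = f * e) :
    ∀ e f : S, IsProj e → IsProj f → IsProj (e * f) := by
  have hDfix : ∀ e : S, IsProj e → D e = e := by
    rintro e ⟨t, rfl⟩
    calc D (D t) = D (R (D t)) := by rw [dr3a]
    _ = R (D t) := dr3b _
    _ = D t := dr3a _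
  rintro e f he hf
  have hge : D (e * f) * e = D (e * f) := by
    have h := dr4b e f; rwa [hDfix e he] at h
  have hgf : D (e * f) * f = D (e * f) := by
    rw [hcomm e f he hf]
    have h := dr4b f e; rwa [hDfix f hf] at h
  refine ⟨e * f, ?_⟩
  calc D (e * f) = D (e * f) * e * f := by rw [hge, hgf]
  _ = D (e * f) * (e * f) := mul_assoc _ _ _
  _ = e * f := dr1 _
end

section
/- In a DR-semigroup, the relation s ≤_r t defined by D(s) ≤ D(t) (natural order on projections) and s = D(s)t is a partial order on S. -/
open DRSemigroup

theorem stmt_4 {S : Type*} [DRSemigroup S] :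
    (∀ s : S, leR s s) ∧
    (∀ s t : S, leR s t → leR t s → s = t) ∧
    (∀ s t u : S, leR s t → leR t u → leR s u) := by
  have idem : ∀ x : S, D x * D x = D x := by
    intro x
    have h := dr4b x (R x)
    rw [dr2] at h
    exact h
  refine ⟨fun s => ⟨⟨(idem s).symm, (idem s).symm⟩, (dr1 s).symm⟩, ?_, ?_⟩
  · rintro s t ⟨⟨h1, h2⟩, h3⟩ ⟨⟨h4, h5⟩, h6⟩
    have hDst : D s = D t := by rw [h1, ← h5]
    rw [h3, hDst, dr1]
  · rintro s t u ⟨⟨h1, h2⟩, h3⟩ ⟨⟨h4, h5⟩, h6⟩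
    refine ⟨⟨?_, ?_⟩, ?_⟩
    · calc D s = D s * D t := h1
        _ = D s * (D t * D u) := by rw [← h4]
        _ = (D s * D t) * D u := by rw [mul_assoc]
        _ = D s * D u := by rw [← h1]
    · calc D s = D t * D s := h2
        _ = (D u * D t) * D s := by rw [← h5]
        _ = D u * (D t * D s) := by rw [mul_assoc]
        _ = D u * D s := by rw [← h2]
    · calc s = D s * t := h3
        _ = D s * (D t * u) := by rw [← h6]
        _ = (D s * D t) * u := by rw [mul_assoc]
        _ = D s * u := by rw [← h1]
end

section
/- A DR-semigroup satisfying the ample conditions also satisfies the generalized ample conditions: D(R(D(xy)x)y) = R(D(xy)x) and R(xD(yR(xy))) = D(yR(xy)) for all x, y. -/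
open DRSemigroup

namespace DRSemigroup

variable {S : Type*} [DRSemigroup S]

lemma D_D' (t : S) : D (D t) = D t := by
  have h2 := dr3b (D t)
  rwa [dr3a t] at h2

lemma R_R' (t : S) : R (R t) = R t := by
  have h2 := dr3a (R t)
  rwa [dr3b t] at h2

lemma D_idem' (t : S) : D t * D t = D t := by
  have := dr1 (D t); rwa [D_D'] at this

lemma R_idem' (t : S) : R t * R t = R t := by
  have := dr2 (R t); rwa [R_R'] at this

end DRSemigroup

open DRSemigroup

theorem stmt_5' {S : Type*} [DRSemigroup S] (h : Ample S) (x y : S) :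
    DRSemigroup.D (DRSemigroup.R (DRSemigroup.D (x * y) * x) * y)
      = DRSemigroup.R (DRSemigroup.D (x * y) * x) ∧
    DRSemigroup.R (x * DRSemigroup.D (y * DRSemigroup.R (x * y)))
      = DRSemigroup.D (y * DRSemigroup.R (x * y)) := by
  obtain ⟨amp1, amp2⟩ := h
  constructor
  · -- Part 1
    set u : S := D (x * y) * x with hu
    have huy : u * y = x * y := by rw [hu, mul_assoc, dr1]
    -- D u = D (x*y)
    have hDu : D u = D (x * y) := by
      have a1 : D (x * y) * D u = D u := by
        have := dr4a (D (x * y)) x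
        rwa [D_D'] at this
      have a2 : D (x * y) * D u = D (x * y) := by
        have := dr4b u y
        rwa [huy] at this
      exact a1.symm.trans a2
    have hDf : D (R u) = R u := dr3b u
    have hfg : R u * D (R u * y) = D (R u * y) := by
      have := dr4a (R u) y; rwa [hDf] at this
    have hgf : D (R u * y) * R u = D (R u * y) := by
      have := dr4b (R u) y; rwa [hDf] at this
    have hgy : D (R u * y) * y = R u * y := by
      conv_lhs => rw [← hgf]
      rw [mul_assoc, dr1]
    have hug : u * D (R u * y) = D (u * D (R u * y)) * u :=
      amp1 u (D (R u * y)) ⟨R u * y, rfl⟩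
    -- u * g * y = x * y
    have h1 : u * D (R u * y) * y = x * y := by
      rw [mul_assoc, hgy, ← mul_assoc, dr2, huy]
    -- also u * g * y = D(u*g) * (x*y)
    have h2 : D (u * D (R u * y)) * (x * y) = x * y := by
      rw [← huy, ← mul_assoc, ← hug, h1, huy]
    -- k := D(u*g); e*k = k
    have hek : D (x * y) * D (u * D (R u * y)) = D (u * D (R u * y)) := by
      have := dr4a u (D (R u * y))
      rwa [hDu] at this
    have hke : D (x * y) * D (u * D (R u * y)) = D (x * y) := by
      have := dr4b (D (u * D (R u * y))) (x * y)
      rw [h2, D_D'] at this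
      exact this
    have hk : D (u * D (R u * y)) = D (x * y) := hek.symm.trans hke
    have hug' : u * D (R u * y) = u := by
      rw [hug, hk, hu, ← mul_assoc, D_idem']
    have hfinal : R u * D (R u * y) = R u := by
      have := dr5b u (D (R u * y))
      rwa [hug', dr3a] at this
    exact hfg.symm.trans hfinal
  · -- Part 2
    set v : S := y * R (x * y) with hv
    have hxv : x * v = x * y := by rw [hv, ← mul_assoc, dr2]
    have hRv : R v = R (x * y) := by
      have a1 : R v * R (x * y) = R v := by
        have := dr5b y (R (x * y))
        rwa [R_R'] at this
      have a2 : R v * R (x * y) = R (x * y) := by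
        have := dr5a x v
        rwa [hxv] at this
      exact a1.symm.trans a2
    have hRf : R (D v) = D v := dr3a v
    have hfg : R (x * D v) * D v = R (x * D v) := by
      have := dr5b x (D v); rwa [hRf] at this
    have hgf : D v * R (x * D v) = R (x * D v) := by
      have := dr5a x (D v); rwa [hRf] at this
    have hgx : x * R (x * D v) = x * D v := by
      conv_lhs => rw [← hgf, ← mul_assoc]
      rw [dr2]
    have hgv : R (x * D v) * v = v * R (R (x * D v) * v) :=
      amp2 v (R (x * D v)) ⟨R (x * D v), dr3b _⟩
    -- x * g * v = x * y
    have h1 : x * (R (x * D v) * v) = x * y := by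
      rw [← mul_assoc, hgx, mul_assoc, dr1, hxv]
    -- also = (x*y) * R(g*v)
    have h2 : (x * y) * R (R (x * D v) * v) = x * y := by
      rw [← hxv, mul_assoc, ← hgv, h1, hxv]
    -- k := R(g*v); k*e = k
    have hek : R (R (x * D v) * v) * R (x * y) = R (R (x * D v) * v) := by
      have := dr5b (R (x * D v)) v
      rwa [hRv] at this
    have hke : R (R (x * D v) * v) * R (x * y) = R (x * y) := by
      have := dr5a (x * y) (R (R (x * D v) * v))
      rw [h2, R_R'] at this
      exact this
    have hk : R (R (x * D v) * v) = R (x * y) := hek.symm.trans hke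
    have hgv' : R (x * D v) * v = v := by
      rw [hgv, hk, hv, mul_assoc, R_idem']
    have hfinal : R (x * D v) * D v = D v := by
      have := dr4a (R (x * D v)) v
      rwa [hgv', dr3b] at this
    exact hfg.symm.trans hfinal


theorem stmt_5 {S : Type*} [DRSemigroup S] (h : Ample S) (x y : S) :
    DRSemigroup.D (DRSemigroup.R (DRSemigroup.D (x * y) * x) * y)
      = DRSemigroup.R (DRSemigroup.D (x * y) * x) ∧
    DRSemigroup.R (x * DRSemigroup.D (y * DRSemigroup.R (x * y)))
      = DRSemigroup.D (y * DRSemigroup.R (x * y)) := by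
  exact stmt_5' h x y
end

section
/- In a DR-semigroup satisfying the ample conditions, the partial orders ≤_r and ≤_l coincide, where s ≤_r t iff D(s) ≤ D(t) and s = D(s)t, and s ≤_l t iff R(s) ≤ R(t) and s = tR(s) (with ≤ the natural order on projections). -/
open DRSemigroup

theorem stmt_6 {S : Type*} [DRSemigroup S] (h : Ample S) (s t : S) :
    leR s t ↔ leL s t := by
  obtain ⟨h1, h2⟩ := h
  have RR : ∀ x : S, DRSemigroup.R (DRSemigroup.R x) = DRSemigroup.R x := by
    intro x
    have := DRSemigroup.dr3a (DRSemigroup.R x)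
    rwa [DRSemigroup.dr3b] at this
  have DD : ∀ x : S, DRSemigroup.D (DRSemigroup.D x) = DRSemigroup.D x := by
    intro x
    have := DRSemigroup.dr3b (DRSemigroup.D x)
    rwa [DRSemigroup.dr3a] at this
  constructor
  · rintro ⟨⟨hp1, hp2⟩, hs⟩
    have hsRt : s * DRSemigroup.R t = s := by
      calc s * DRSemigroup.R t = DRSemigroup.D s * (t * DRSemigroup.R t) := by
            rw [← mul_assoc, ← hs]
        _ = DRSemigroup.D s * t := by rw [DRSemigroup.dr2]
        _ = s := hs.symm
    have key : s = t * DRSemigroup.R s := by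
      have := h2 t (DRSemigroup.D s) ⟨s, rfl⟩
      rw [← hs] at this
      exact this
    constructor
    · constructor
      · have := DRSemigroup.dr5b s (DRSemigroup.R t)
        rw [hsRt, RR] at this
        exact this.symm
      · have := DRSemigroup.dr5a s (DRSemigroup.R t)
        rw [hsRt, RR] at this
        exact this.symm
    · exact key
  · rintro ⟨⟨hp1, hp2⟩, hs⟩
    have hDts : DRSemigroup.D t * s = s := by
      calc DRSemigroup.D t * s = (DRSemigroup.D t * t) * DRSemigroup.R s := by
            rw [mul_assoc, ← hs]
        _ = t * DRSemigroup.R s := by rw [DRSemigroup.dr1]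
        _ = s := hs.symm
    have key : s = DRSemigroup.D s * t := by
      have := h1 t (DRSemigroup.R s) ⟨DRSemigroup.R s, DRSemigroup.dr3b s⟩
      rw [← hs] at this
      exact this
    constructor
    · constructor
      · have := DRSemigroup.dr4b (DRSemigroup.D t) s
        rw [hDts, DD] at this
        exact this.symm
      · have := DRSemigroup.dr4a (DRSemigroup.D t) s
        rw [hDts, DD] at this
        exact this.symm
    · exact key
end

section
/- In a DR-semigroup satisfying the ample conditions, all projections commute: ef = fe for all e, f ∈ D(S). -/
open DRSemigroup

theorem stmt_7 {S : Type*} [DRSemigroup S] (h : Ample S)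
    (e f : S) (he : IsProj e) (hf : IsProj f) : e * f = f * e := by
  obtain ⟨t, rfl⟩ := he
  obtain ⟨u, rfl⟩ := hf
  set e := DRSemigroup.D t with hE
  set f := DRSemigroup.D u with hF
  have hDe : DRSemigroup.D e = e := by
    rw [hE, ← DRSemigroup.dr3a t, DRSemigroup.dr3b, DRSemigroup.dr3a]
  have hDf : DRSemigroup.D f = f := by
    rw [hF, ← DRSemigroup.dr3a u, DRSemigroup.dr3b, DRSemigroup.dr3a]
  -- e*f is a projection
  have hef : e * f = DRSemigroup.D (e * f) := by
    have h1 := h.1 e f ⟨u, rfl⟩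
    have h2 := DRSemigroup.dr4b e f
    rw [hDe] at h2
    exact h1.trans h2
  have hfe : f * e = DRSemigroup.D (f * e) := by
    have h1 := h.1 f e ⟨t, rfl⟩
    have h2 := DRSemigroup.dr4b f e
    rw [hDf] at h2
    exact h1.trans h2
  -- fe * f = fe
  have hfef : (f * e) * f = f * e := by
    have h2 := DRSemigroup.dr4b f e
    rw [hDf, ← hfe] at h2
    exact h2
  -- f * (e * f) = e * f
  have hRef : DRSemigroup.R (e * f) = e * f := by
    conv_lhs => rw [hef]
    rw [DRSemigroup.dr3a, ← hef]
  have hfef2 : f * (e * f) = e * f := by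
    have h1 := h.2 f e ⟨t, rfl⟩
    rw [hRef] at h1
    exact h1.symm
  calc e * f = f * (e * f) := hfef2.symm
    _ = (f * e) * f := (mul_assoc f e f).symm
    _ = f * e := hfef
end

section
/- In a DR-semigroup satisfying the ample conditions, multiplication is monotonic with respect to the standard order: if s1 ≤ t1 and s2 ≤ t2 then s1 s2 ≤ t1 t2, where s ≤ t means D(s) ≤ D(t) and s = D(s)t. -/
open DRSemigroup

theorem stmt_8 {S : Type*} [DRSemigroup S] (h : Ample S)
    (s1 t1 s2 t2 : S) (h1 : leR s1 t1) (h2 : leR s2 t2) :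
    leR (s1 * s2) (t1 * t2) := by
  obtain ⟨amp1, amp2⟩ := h
  obtain ⟨⟨_, _⟩, hs1⟩ := h1
  obtain ⟨⟨_, _⟩, hs2⟩ := h2
  have hamp1 : s1 * D s2 = D (s1 * D s2) * s1 := amp1 s1 (D s2) ⟨s2, rfl⟩
  have key1 : s1 * s2 = (s1 * D s2) * s2 := by rw [mul_assoc, dr1]
  have hdu : D (s1 * D s2) * D s1 = D (s1 * D s2) := dr4b s1 (D s2)
  have key2 : s1 * s2 = D (s1 * D s2) * (t1 * t2) := by
    calc s1 * s2 = s1 * (D s2 * t2) := by rw [← hs2]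
    _ = (s1 * D s2) * t2 := by rw [mul_assoc]
    _ = D (s1 * D s2) * s1 * t2 := by rw [← hamp1]
    _ = D (s1 * D s2) * (D s1 * t1) * t2 := by rw [← hs1]
    _ = (D (s1 * D s2) * D s1) * (t1 * t2) := by
        rw [mul_assoc, mul_assoc, mul_assoc]
    _ = D (s1 * D s2) * (t1 * t2) := by rw [hdu]
  have hDle : D (s1 * s2) * D (s1 * D s2) = D (s1 * s2) := by
    rw [key1]; exact dr4b (s1 * D s2) s2
  have heq : s1 * s2 = D (s1 * s2) * (t1 * t2) := by
    calc s1 * s2 = D (s1 * s2) * (s1 * s2) := (dr1 _).symm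
    _ = D (s1 * s2) * (D (s1 * D s2) * (t1 * t2)) := by rw [← key2]
    _ = (D (s1 * s2) * D (s1 * D s2)) * (t1 * t2) := by rw [mul_assoc]
    _ = D (s1 * s2) * (t1 * t2) := by rw [hDle]
  have hamp2 : D (s1 * s2) * (t1 * t2)
      = (t1 * t2) * R (D (s1 * s2) * (t1 * t2)) :=
    amp2 (t1 * t2) (D (s1 * s2)) ⟨s1 * s2, rfl⟩
  have heq2 : s1 * s2 = (t1 * t2) * R (D (s1 * s2) * (t1 * t2)) := heq.trans hamp2
  refine ⟨⟨?_, ?_⟩, heq⟩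
  · have h4 := dr4b (t1 * t2) (R (D (s1 * s2) * (t1 * t2)))
    rw [← heq2] at h4
    exact h4.symm
  · have h4 := dr4a (t1 * t2) (R (D (s1 * s2) * (t1 * t2)))
    rw [← heq2] at h4
    exact h4.symm
end

section
/- A DR-semigroup S satisfies the ample conditions if and only if the partial orders ≤_r and ≤_l coincide and the projections D(S) commute. -/
open DRSemigroup


section Helpers
variable {S : Type*} [DRSemigroup S]

lemma D_of_proj {e : S} (he : IsProj e) : D e = e := by
  obtain ⟨t, rfl⟩ := he
  have h := dr3b (S := S) (D t)
  rwa [dr3a] at h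

lemma R_of_proj {e : S} (he : IsProj e) : R e = e := by
  obtain ⟨t, rfl⟩ := he
  exact dr3a t

lemma proj_D (x : S) : IsProj (D x) := ⟨x, rfl⟩

lemma proj_R (x : S) : IsProj (R x) := ⟨R x, dr3b x⟩

lemma proj_idem {e : S} (he : IsProj e) : e * e = e := by
  obtain ⟨t, rfl⟩ := he
  have h := dr4a t (R t)
  rwa [dr2] at h

/-- Under commuting projections, a product of projections is a projection. -/
lemma proj_mul (hcomm : ∀ e f : S, IsProj e → IsProj f → e * f = f * e)
    {e f : S} (he : IsProj e) (hf : IsProj f) : IsProj (e * f) := by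
  refine ⟨e * f, ?_⟩
  have d2 : D (e * f) * e = D (e * f) := by
    have h := dr4b e f; rwa [D_of_proj he] at h
  have d4 : D (e * f) * f = D (e * f) := by
    have h := dr4b f e; rw [D_of_proj hf] at h
    rwa [← hcomm e f he hf] at h
  calc D (e * f) = D (e * f) * e * f := by rw [d2, d4]
    _ = D (e * f) * (e * f) := by rw [mul_assoc]
    _ = e * f := dr1 _

end Helpers

theorem stmt_9 {S : Type*} [DRSemigroup S] :
    Ample S ↔
      ((∀ s t : S, leR s t ↔ leL s t) ∧
        ∀ e f : S, IsProj e → IsProj f → e * f = f * e) := by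
  constructor
  · rintro ⟨a1, a2⟩
    -- products of projections are projections (fixed by D and R)
    have hDef : ∀ u v : S, IsProj u → IsProj v → u * v = D (u * v) := by
      intro u v hu hv
      have h1 := a1 u v hv
      have h2 := dr4b u v
      rw [D_of_proj hu] at h2
      rw [h2] at h1
      exact h1
    have hRef : ∀ u v : S, IsProj u → IsProj v → u * v = R (u * v) := by
      intro u v hu hv
      have h1 := a2 v u hu
      have h2 := dr5a u v
      rw [R_of_proj hv] at h2
      rw [h2] at h1
      exact h1
    constructor
    · -- the two orders coincide
      intro s t
      constructor
      · rintro ⟨⟨_, _⟩, h3⟩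
        have r1 := dr5a (D s) t
        rw [← h3] at r1
        have r2 := dr5b (D s) t
        rw [← h3] at r2
        have third := a2 t (D s) (proj_D s)
        rw [← h3] at third
        exact ⟨⟨r2.symm, r1.symm⟩, third⟩
      · rintro ⟨⟨_, _⟩, h3⟩
        have hm := a1 t (R s) (proj_R s)
        rw [← h3] at hm
        have d1 := dr4a t (R s)
        rw [← h3] at d1
        have d2 := dr4b t (R s)
        rw [← h3] at d2
        exact ⟨⟨d2.symm, d1.symm⟩, hm⟩
    · -- projections commute
      intro e f he hf
      have hD := hDef e f he hf
      have hR := hRef e f he hf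
      have hRfe := hRef f e hf he
      have a_ef_e : (e * f) * e = e * f := by
        have h2 := dr4b e f
        rw [D_of_proj he] at h2
        calc (e * f) * e = D (e * f) * e := by rw [← hD]
          _ = D (e * f) := h2
          _ = e * f := hD.symm
      have e_fe : e * (f * e) = f * e := by
        have h5 := dr5a f e
        rw [R_of_proj he] at h5
        rw [hRfe]; exact h5
      have ef_f : (e * f) * f = e * f := by rw [mul_assoc, proj_idem hf]
      have f_fe : f * (f * e) = f * e := by rw [← mul_assoc, proj_idem hf]
      calc e * f = ((e * f) * f) * e := by rw [ef_f, a_ef_e]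
        _ = (e * f) * (f * e) := by rw [mul_assoc]
        _ = e * (f * (f * e)) := by rw [mul_assoc]
        _ = e * (f * e) := by rw [f_fe]
        _ = f * e := e_fe
  · rintro ⟨hord, hcomm⟩
    constructor
    · -- first ample condition
      intro x e he
      have hRx : IsProj (R x) := proj_R x
      have hg : IsProj (R x * e) := proj_mul hcomm hRx he
      have hxg : x * (R x * e) = x * e := by rw [← mul_assoc, dr2]
      have hRxe_e : e * R (x * e) = R (x * e) := by
        have h := dr5a x e; rwa [R_of_proj he] at h
      have k1 : (R x * e) * R (x * e) = R (x * e) := by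
        have h := dr5a x (R x * e)
        rw [R_of_proj hg, hxg] at h
        exact h
      have r1 : R x * R (x * e) = R (x * e) := by
        calc R x * R (x * e) = R x * ((R x * e) * R (x * e)) := by rw [k1]
          _ = ((R x * R x) * e) * R (x * e) := by rw [← mul_assoc, ← mul_assoc]
          _ = (R x * e) * R (x * e) := by rw [proj_idem hRx]
          _ = R (x * e) := k1
      have r2 : R (x * e) * R x = R (x * e) := by
        rw [hcomm _ _ (proj_R _) hRx]; exact r1
      have r3 : x * R (x * e) = x * e := by
        calc x * R (x * e) = x * (e * R (x * e)) := by rw [hRxe_e]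
          _ = (x * e) * R (x * e) := by rw [mul_assoc]
          _ = x * e := dr2 _
      exact ((hord (x * e) x).mpr ⟨⟨r2.symm, r1.symm⟩, r3.symm⟩).2
    · -- second ample condition
      intro x e he
      have hDx : IsProj (D x) := proj_D x
      have hd2 : D (e * x) * e = D (e * x) := by
        have h := dr4b e x; rwa [D_of_proj he] at h
      have h3 : e * x = D (e * x) * x := by
        calc e * x = D (e * x) * (e * x) := (dr1 _).symm
          _ = (D (e * x) * e) * x := by rw [← mul_assoc]
          _ = D (e * x) * x := by rw [hd2]
      have hg' : IsProj (e * D x) := proj_mul hcomm he hDx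
      have hg'x : (e * D x) * x = e * x := by rw [mul_assoc, dr1]
      have k : (e * D x) * D (e * x) = D (e * x) := by
        have h := dr4a (e * D x) x
        rw [D_of_proj hg', hg'x] at h
        exact h
      have d1 : D x * D (e * x) = D (e * x) := by
        calc D x * D (e * x) = D x * ((e * D x) * D (e * x)) := by rw [k]
          _ = ((D x * e) * D x) * D (e * x) := by rw [← mul_assoc, ← mul_assoc]
          _ = ((e * D x) * D x) * D (e * x) := by rw [hcomm (D x) e hDx he]
          _ = (e * (D x * D x)) * D (e * x) := by rw [mul_assoc e]
          _ = (e * D x) * D (e * x) := by rw [proj_idem hDx]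
          _ = D (e * x) := k
      have d2 : D (e * x) * D x = D (e * x) := by
        rw [hcomm _ _ (proj_D _) hDx]; exact d1
      exact ((hord (e * x) x).mp ⟨⟨d2.symm, d1.symm⟩, h3⟩).2
end

section
/- In a DR-semigroup S, the set B(S) of bideterministic elements is closed under multiplication (i.e., it is a subsemigroup). -/
open DRSemigroup

lemma myDproj {S : Type*} [DRSemigroup S] (t : S) : D (D t) = D t := by
  rw [← dr3a t, dr3b, dr3a]

lemma myRproj {S : Type*} [DRSemigroup S] (t : S) : R (R t) = R t := by
  rw [← dr3b t, dr3a, dr3b]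

lemma key_left {S : Type*} [DRSemigroup S] (x f : S) (hf : D f = f) :
    D (f * x) * x = f * x := by
  have h1 : D (f * x) * D f = D (f * x) := dr4b f x
  rw [hf] at h1
  calc D (f * x) * x = D (f * x) * f * x := by rw [h1]
    _ = D (f * x) * (f * x) := mul_assoc _ _ _
    _ = f * x := dr1 _

lemma key_right {S : Type*} [DRSemigroup S] (x g : S) (hg : R g = g) :
    x * R (x * g) = x * g := by
  have h1 : R g * R (x * g) = R (x * g) := dr5a x g
  rw [hg] at h1
  calc x * R (x * g) = x * (g * R (x * g)) := by rw [h1]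
    _ = x * g * R (x * g) := (mul_assoc _ _ _).symm
    _ = x * g := dr2 _

theorem stmt_10 {S : Type*} [DRSemigroup S] (a b : S)
    (ha : Bidet a) (hb : Bidet b) : Bidet (a * b) := by
  intro e he
  constructor
  · have hb1 : b * e = D (b * e) * b := (hb e he).1
    have ha1 : a * D (b * e) = D (a * D (b * e)) * a :=
      (ha (D (b * e)) ⟨b * e, rfl⟩).1
    have heq : a * b * e = D (a * D (b * e)) * (a * b) := by
      calc a * b * e = a * (b * e) := mul_assoc _ _ _
        _ = a * (D (b * e) * b) := by rw [← hb1]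
        _ = a * D (b * e) * b := (mul_assoc _ _ _).symm
        _ = D (a * D (b * e)) * a * b := by rw [← ha1]
        _ = D (a * D (b * e)) * (a * b) := mul_assoc _ _ _
    rw [heq]
    exact (key_left (a * b) _ (myDproj _)).symm
  · have ha2 : e * a = a * R (e * a) := (ha e he).2
    have hb2 : R (e * a) * b = b * R (R (e * a) * b) :=
      (hb (R (e * a)) ⟨R (e * a), dr3b _⟩).2
    have heq : e * (a * b) = (a * b) * R (R (e * a) * b) := by
      calc e * (a * b) = e * a * b := (mul_assoc _ _ _).symm
        _ = a * R (e * a) * b := by rw [← ha2]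
        _ = a * (R (e * a) * b) := mul_assoc _ _ _
        _ = a * (b * R (R (e * a) * b)) := by rw [← hb2]
        _ = a * b * R (R (e * a) * b) := (mul_assoc _ _ _).symm
    rw [heq]
    exact (key_right (a * b) _ (myRproj _)).symm
end

section
/- Let (X,≤) be a quasiordered set and P_SO(X) the semigroup of strongly order-preserving partial functions on X under composition, with D(f) the identity restricted to the down-set generated by dom(f) and R(f) defined dually via im(f). Then P_SO(X) satisfies the right ample condition: ef = f·R(ef) for every strongly order-preserving partial function f and every e ∈ D(P_SO(X)). -/
/-- Composition of partial functions (encoded as `X → Option X`),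
applying `f` first and then `g`. -/
def pcomp {X : Type*} (f g : X → Option X) : X → Option X :=
  fun x => (f x).bind g

/-- `f` is strongly order-preserving with respect to the quasiorder `r`. -/
def StronglyOrderPreserving {X : Type*} (r : X → X → Prop) (f : X → Option X) : Prop :=
  ∀ x y a b : X, f x = some a → f y = some b → (r x y ↔ r a b)

open Classical in
/-- `D(f)`: the identity restricted to the down-set generated by `dom(f)`. -/
noncomputable def Dop {X : Type*} (r : X → X → Prop) (f : X → Option X) : X → Option X :=
  fun x => if ∃ y : X, (f y).isSome ∧ r x y then some x else none

open Classical in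
/-- `R(f)`: the identity restricted to the down-set generated by `im(f)`. -/
noncomputable def Rop {X : Type*} (r : X → X → Prop) (f : X → Option X) : X → Option X :=
  fun x => if ∃ a b : X, f a = some b ∧ r x b then some x else none

/-!
`D(g)` is the identity on a down-set `S`, so `e f` is `f` restricted to `S`. Where `x ∈ S` and
`f x = b`, the point `b` lies in the image of `e f`, hence is fixed by `R(e f)`. Where `x ∉ S`,
`R(e f)` must kill `f x`: if `f x ≤ f a` with `a ∈ S`, then `x ≤ a` because `f` reflects the order,
and `x ∈ S` since `S` is a down-set.
-/

section PartialIdentity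

variable {X : Type*}

open Classical in
noncomputable def restrictId (S : Set X) : X → Option X :=
  fun x => if x ∈ S then some x else none

theorem Dop_eq_restrictId (r : X → X → Prop) (g : X → Option X) :
    Dop r g = restrictId {x | ∃ y, (g y).isSome ∧ r x y} :=
  rfl

theorem Rop_eq_restrictId (r : X → X → Prop) (h : X → Option X) :
    Rop r h = restrictId {x | ∃ a b, h a = some b ∧ r x b} :=
  rfl

theorem restrictId_apply_of_mem {S : Set X} {x : X} (hx : x ∈ S) : restrictId S x = some x :=
  if_pos hx

theorem restrictId_apply_of_notMem {S : Set X} {x : X} (hx : x ∉ S) : restrictId S x = none :=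
  if_neg hx

open Classical in
theorem pcomp_restrictId_apply (S : Set X) (f : X → Option X) (x : X) :
    pcomp (restrictId S) f x = if x ∈ S then f x else none := by
  by_cases hx : x ∈ S
  · rw [if_pos hx, pcomp, restrictId_apply_of_mem hx, Option.bind_some]
  · rw [if_neg hx, pcomp, restrictId_apply_of_notMem hx, Option.bind_none]

theorem pcomp_restrictId_eq_pcomp_Rop {r : X → X → Prop} (hrefl : ∀ x, r x x)
    {S : Set X} (hS : ∀ x a, r x a → a ∈ S → x ∈ S)
    {f : X → Option X} (hf : ∀ x a b c, f x = some b → f a = some c → r b c → r x a) :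
    pcomp (restrictId S) f = pcomp f (Rop r (pcomp (restrictId S) f)) := by
  funext x
  rw [pcomp_restrictId_apply, Rop_eq_restrictId]
  show _ = (f x).bind _
  cases hfx : f x with
  | none => simp
  | some b =>
    rw [Option.bind_some]
    by_cases hx : x ∈ S
    · rw [if_pos hx, restrictId_apply_of_mem]
      exact ⟨x, b, by rw [pcomp_restrictId_apply, if_pos hx, hfx], hrefl b⟩
    · rw [if_neg hx, restrictId_apply_of_notMem]
      rintro ⟨a, c, hac, hbc⟩
      rw [pcomp_restrictId_apply] at hac
      split_ifs at hac with ha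
      exact hx (hS x a (hf x a b c hfx hac hbc) ha)

end PartialIdentity

theorem stmt_14 {X : Type*} (r : X → X → Prop)
    (hrefl : ∀ x : X, r x x) (htrans : ∀ x y z : X, r x y → r y z → r x z)
    (f : X → Option X) (hf : StronglyOrderPreserving r f)
    (e : X → Option X)
    (he : ∃ g : X → Option X, StronglyOrderPreserving r g ∧ e = Dop r g) :
    pcomp e f = pcomp f (Rop r (pcomp e f)) := by
  obtain ⟨g, -, rfl⟩ := he
  rw [Dop_eq_restrictId]
  refine pcomp_restrictId_eq_pcomp_Rop hrefl ?_ fun x a b c hb hc => (hf x a b c hb hc).2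
  rintro x a hxa ⟨y, hy, hay⟩
  exact ⟨y, hy, htrans x a y hxa hay⟩
end

section
/- A DR-semigroup S satisfies the implication trace(x,y) ⟹ cat(x,y) for all x, y (where cat(x,y) means R(x) = D(y), and trace(x,y) means D(xy) = D(x) and R(xy) = R(y)) if and only if S satisfies the ample conditions. -/
open DRSemigroup

private theorem DD_aux {S : Type*} [DRSemigroup S] (z : S) : D (D z) = D z := by
  rw [← dr3a z]; exact dr3b (D z)

private theorem RR_aux {S : Type*} [DRSemigroup S] (z : S) : R (R z) = R z := by
  rw [← dr3b z]; exact dr3a (R z)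

theorem stmt_15 {S : Type*} [DRSemigroup S] :
    (∀ x y : S,
        (DRSemigroup.D (x * y) = DRSemigroup.D x ∧
          DRSemigroup.R (x * y) = DRSemigroup.R y) →
        DRSemigroup.R x = DRSemigroup.D y) ↔ Ample S := by
  constructor
  · intro H
    constructor
    · -- x * e = D (x*e) * x
      intro x e he
      obtain ⟨t, ht⟩ := he
      have hRe : R e = e := by rw [← ht]; exact dr3a t
      have hDe : D e = e := by rw [← hRe]; exact dr3b e
      have hax_e : D (x * e) * x * e = x * e := by
        rw [mul_assoc]; exact dr1 (x * e)
      have h1a : D (D (x * e) * x) * D (x * e) = D (D (x * e) * x) := by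
        have h := dr4b (D (x * e)) x
        rwa [DD_aux] at h
      have h1b : D (D (x * e) * x) * D (x * e) = D (x * e) := by
        have h := dr4a (D (x * e) * x) e
        rwa [hax_e] at h
      have h1 : D (D (x * e) * x) = D (x * e) := by rw [← h1a]; exact h1b
      have hxv : x * (e * R (x * e)) = x * e := by
        rw [← mul_assoc]; exact dr2 (x * e)
      have h2a : R (e * R (x * e)) * R (x * e) = R (e * R (x * e)) := by
        have h := dr5b e (R (x * e))
        rwa [RR_aux] at h
      have h2b : R (e * R (x * e)) * R (x * e) = R (x * e) := by
        have h := dr5a x (e * R (x * e))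
        rwa [hxv] at h
      have h2 : R (e * R (x * e)) = R (x * e) := by rw [← h2a]; exact h2b
      have huv : D (x * e) * x * (e * R (x * e)) = x * e := by
        rw [mul_assoc, hxv]; exact dr1 (x * e)
      have hcat : R (D (x * e) * x) = D (e * R (x * e)) :=
        H (D (x * e) * x) (e * R (x * e)) ⟨by rw [huv, h1], by rw [huv, h2]⟩
      have h4 : D (e * R (x * e)) * e = D (e * R (x * e)) := by
        have h := dr4b e (R (x * e))
        rwa [hDe] at h
      have h5 : R (D (x * e) * x) * e = R (D (x * e) * x) := by
        rw [hcat]; exact h4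
      have key : D (x * e) * x = x * e := by
        calc D (x * e) * x = D (x * e) * x * R (D (x * e) * x) := (dr2 _).symm
          _ = D (x * e) * x * (R (D (x * e) * x) * e) := by rw [h5]
          _ = D (x * e) * x * R (D (x * e) * x) * e := by rw [← mul_assoc]
          _ = D (x * e) * x * e := by rw [dr2]
          _ = x * e := hax_e
      exact key.symm
    · -- e * x = x * R (e*x)
      intro x e he
      obtain ⟨t, ht⟩ := he
      have hRe : R e = e := by rw [← ht]; exact dr3a t
      have hexb : e * (x * R (e * x)) = e * x := by
        rw [← mul_assoc]; exact dr2 (e * x)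
      have h1a : R (x * R (e * x)) * R (e * x) = R (x * R (e * x)) := by
        have h := dr5b x (R (e * x))
        rwa [RR_aux] at h
      have h1b : R (x * R (e * x)) * R (e * x) = R (e * x) := by
        have h := dr5a e (x * R (e * x))
        rwa [hexb] at h
      have h1 : R (x * R (e * x)) = R (e * x) := by rw [← h1a]; exact h1b
      have hvx : D (e * x) * e * x = e * x := by
        rw [mul_assoc]; exact dr1 (e * x)
      have h2a : D (D (e * x) * e) * D (e * x) = D (D (e * x) * e) := by
        have h := dr4b (D (e * x)) e
        rwa [DD_aux] at h
      have h2b : D (D (e * x) * e) * D (e * x) = D (e * x) := by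
        have h := dr4a (D (e * x) * e) x
        rwa [hvx] at h
      have h2 : D (D (e * x) * e) = D (e * x) := by rw [← h2a]; exact h2b
      have hvu : D (e * x) * e * (x * R (e * x)) = e * x := by
        rw [mul_assoc, hexb]; exact dr1 (e * x)
      have hcat : R (D (e * x) * e) = D (x * R (e * x)) :=
        H (D (e * x) * e) (x * R (e * x)) ⟨by rw [hvu, h2], by rw [hvu, h1]⟩
      have h4 : e * R (D (e * x) * e) = R (D (e * x) * e) := by
        have h := dr5a (D (e * x)) e
        rwa [hRe] at h
      have h5 : e * D (x * R (e * x)) = D (x * R (e * x)) := by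
        rw [← hcat]; exact h4
      have key : x * R (e * x) = e * x := by
        calc x * R (e * x) = D (x * R (e * x)) * (x * R (e * x)) := (dr1 _).symm
          _ = e * D (x * R (e * x)) * (x * R (e * x)) := by rw [h5]
          _ = e * (D (x * R (e * x)) * (x * R (e * x))) := by rw [mul_assoc]
          _ = e * (x * R (e * x)) := by rw [dr1]
          _ = e * x := hexb
      exact key.symm
  · rintro ⟨A1, A2⟩ x y ⟨hD, hR⟩
    have pRx : IsProj (R x) := ⟨R x, dr3b x⟩
    have pDy : IsProj (D y) := ⟨y, rfl⟩
    have s1a : R (R x * y) * R y = R (R x * y) := dr5b (R x) y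
    have s1b : R (R x * y) * R y = R y := by
      have h := dr5a x (R x * y)
      rwa [← mul_assoc, dr2, hR] at h
    have s1 : R (R x * y) = R y := by rw [← s1a]; exact s1b
    have hy : R x * y = y := by
      have h := A2 y (R x) pRx
      rwa [s1, dr2] at h
    have s2a : D (x * D y) * D x = D (x * D y) := dr4b x (D y)
    have s2b : D (x * D y) * D x = D x := by
      have h := dr4a (x * D y) y
      rwa [mul_assoc, dr1, hD] at h
    have s2 : D (x * D y) = D x := by rw [← s2a]; exact s2b
    have hx : x * D y = x := by
      have h := A1 x (D y) pDy
      rwa [s2, dr1] at h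
    have t1 : R x * D y = D y := by
      have h := dr4a (R x) y
      rwa [dr3b, hy] at h
    have t2 : R x * D y = R x := by
      have h := dr5b x (D y)
      rwa [hx, dr3a] at h
    rw [← t2]; exact t1
end

section
/- In a DR-semigroup S satisfying the ample conditions, for all x, y ∈ S the pair (D(xy)x, yR(xy)) satisfies cat and trace: R(D(xy)x) = D(yR(xy)), D((D(xy)x)(yR(xy))) = D(D(xy)x), R((D(xy)x)(yR(xy))) = R(yR(xy)), and (D(xy)x)(yR(xy)) = xy. -/
open DRSemigroup

theorem stmt_16 {S : Type*} [DRSemigroup S] (h : Ample S) (x y : S) :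
    DRSemigroup.R (DRSemigroup.D (x * y) * x) = DRSemigroup.D (y * DRSemigroup.R (x * y)) ∧
    DRSemigroup.D ((DRSemigroup.D (x * y) * x) * (y * DRSemigroup.R (x * y)))
      = DRSemigroup.D (DRSemigroup.D (x * y) * x) ∧
    DRSemigroup.R ((DRSemigroup.D (x * y) * x) * (y * DRSemigroup.R (x * y)))
      = DRSemigroup.R (y * DRSemigroup.R (x * y)) ∧
    (DRSemigroup.D (x * y) * x) * (y * DRSemigroup.R (x * y)) = x * y := by
  obtain ⟨amp1, amp2⟩ := h
  set e := DRSemigroup.D (x * y) with he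
  set f := DRSemigroup.R (x * y) with hf
  set a := e * x with ha
  set b := y * f with hb
  have hDe : DRSemigroup.D e = e := by
    have := dr3b (DRSemigroup.D (x * y))
    rw [dr3a (x * y)] at this
    exact this
  have hRf : DRSemigroup.R f = f := by
    have := dr3a (DRSemigroup.R (x * y))
    rw [dr3b (x * y)] at this
    exact this
  have hab : a * b = x * y := by
    rw [ha, hb, mul_assoc, ← mul_assoc x y f, hf, dr2, he, dr1]
  have hay : a * y = x * y := by rw [ha, mul_assoc, he, dr1]
  have hxb : x * b = x * y := by rw [hb, ← mul_assoc, hf, dr2]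
  have hDa : DRSemigroup.D a = e := by
    have h1 : DRSemigroup.D a * e = DRSemigroup.D a := by
      have := dr4b e x; rw [← ha, hDe] at this; exact this
    have h2 : DRSemigroup.D a * e = e := by
      have := dr4a a y; rw [hay, ← he] at this; exact this
    rw [← h1, h2]
  have hRb : DRSemigroup.R b = f := by
    have h1 : DRSemigroup.R b * f = DRSemigroup.R b := by
      have := dr5b y f; rw [← hb, hRf] at this; exact this
    have h2 : DRSemigroup.R b * f = f := by
      have := dr5a x b; rw [hxb, ← hf] at this; exact this
    rw [← h1, h2]
  have hpDb : IsProj (DRSemigroup.D b) := ⟨b, rfl⟩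
  have hpRa : IsProj (DRSemigroup.R a) := ⟨DRSemigroup.R a, dr3b a⟩
  -- Part A : a * D b = a, hence R a * D b = R a
  have hA : a * DRSemigroup.D b = a := by
    have h1 : (a * DRSemigroup.D b) * b = a * b := by rw [mul_assoc, dr1]
    have h2 : DRSemigroup.D (a * DRSemigroup.D b) * DRSemigroup.D a
        = DRSemigroup.D a := by
      have := dr4a (a * DRSemigroup.D b) b
      rw [h1, hab, ← he, ← hDa] at this
      exact this
    have h3 : DRSemigroup.D (a * DRSemigroup.D b) = DRSemigroup.D a := by
      have := dr4b a (DRSemigroup.D b)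
      rw [h2] at this
      exact this.symm
    rw [amp1 a (DRSemigroup.D b) hpDb, h3, dr1]
  have h5 : DRSemigroup.R a * DRSemigroup.D b = DRSemigroup.R a := by
    have := dr5b a (DRSemigroup.D b)
    rw [hA, dr3a b] at this
    exact this
  -- Part B : R a * b = b, hence R a * D b = D b
  have hB : DRSemigroup.R a * b = b := by
    have h1 : a * (DRSemigroup.R a * b) = a * b := by rw [← mul_assoc, dr2]
    have h2 : DRSemigroup.R (DRSemigroup.R a * b) * DRSemigroup.R b
        = DRSemigroup.R b := by
      have := dr5a a (DRSemigroup.R a * b)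
      rw [h1, hab, ← hf, ← hRb] at this
      exact this
    have h3 : DRSemigroup.R (DRSemigroup.R a * b) = DRSemigroup.R b := by
      have := dr5b (DRSemigroup.R a) b
      rw [h2] at this
      exact this.symm
    rw [amp2 b (DRSemigroup.R a) hpRa, h3, dr2]
  have h6 : DRSemigroup.R a * DRSemigroup.D b = DRSemigroup.D b := by
    have := dr4a (DRSemigroup.R a) b
    rw [hB, dr3b a] at this
    exact this
  refine ⟨by rw [← h5, h6], ?_, ?_, hab⟩
  · rw [hab, ← he, hDa]
  · rw [hab, ← hf, hRb]
end

section
/- In a DR-semigroup S satisfying the ample conditions, for all x, y ∈ S, the elements x' = D(xy)x and y' = yR(xy) are the largest elements (under the standard order) with x' ≤ x, y' ≤ y such that cat(x',y') and trace(x',y') both hold: i.e., if x1 ≤ x, y1 ≤ y, R(x1) = D(y1), D(x1y1) = D(x1) and R(x1y1) = R(y1), then x1 ≤ D(xy)x and y1 ≤ yR(xy). -/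
open DRSemigroup

theorem stmt_17 {S : Type*} [DRSemigroup S] (h : Ample S) (x y x1 y1 : S)
    (hx1 : leR x1 x) (hy1 : leR y1 y)
    (hcat : DRSemigroup.R x1 = DRSemigroup.D y1)
    (htr1 : DRSemigroup.D (x1 * y1) = DRSemigroup.D x1)
    (htr2 : DRSemigroup.R (x1 * y1) = DRSemigroup.R y1) :
    leR x1 (DRSemigroup.D (x * y) * x) ∧ leR y1 (y * DRSemigroup.R (x * y)) := by
  classical
  obtain ⟨ha1, ha2⟩ := h
  obtain ⟨⟨hd1, hd2⟩, hx⟩ := hx1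
  obtain ⟨⟨he1, he2⟩, hy⟩ := hy1
  have projD : ∀ t : S, IsProj (D t) := fun t => ⟨t, rfl⟩
  -- Key lemma: for a projection e, D (e * z) ≤ D z (needs the ample condition)
  have lem : ∀ (e z : S), IsProj e →
      D (e * z) * D z = D (e * z) ∧ D z * D (e * z) = D (e * z) := by
    intro e z he
    have h2 : e * z = z * R (e * z) := ha2 z e he
    have l1 := dr4b z (R (e * z))
    have l2 := dr4a z (R (e * z))
    rw [← h2] at l1 l2
    exact ⟨l1, l2⟩
  -- x1 * y1 = D x1 * (x * y)
  have key : x1 * y1 = D x1 * (x * y) := by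
    have hy' : y1 = R x1 * y := by rw [hy, hcat]
    calc x1 * y1 = x1 * (R x1 * y) := by rw [← hy']
      _ = (x1 * R x1) * y := by rw [mul_assoc]
      _ = x1 * y := by rw [dr2]
      _ = (D x1 * x) * y := by rw [← hx]
      _ = D x1 * (x * y) := by rw [mul_assoc]
  -- Claim A : D x1 ≤ D (x*y)
  have hDkey : D (D x1 * (x * y)) = D x1 := by rw [← key, htr1]
  have hA := lem (D x1) (x * y) (projD x1)
  rw [hDkey] at hA
  obtain ⟨hA1, hA2⟩ := hA
  -- part (ii) for x
  have hiix : x1 = D x1 * (D (x * y) * x) := by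
    rw [← mul_assoc, hA1, ← hx]
  -- part (i) for x
  have hix := lem (D x1) (D (x * y) * x) (projD x1)
  rw [← hiix] at hix
  -- Claim B : R y1 ≤ R (x*y)
  have hRkey : R (D x1 * (x * y)) = R y1 := by rw [← key, htr2]
  have hB1 := dr5b (D x1) (x * y)
  have hB2 := dr5a (D x1) (x * y)
  rw [hRkey] at hB1 hB2
  -- y1 * R (x*y) = y1
  have hy1R : y1 * R (x * y) = y1 := by
    calc y1 * R (x * y) = (y1 * R y1) * R (x * y) := by rw [dr2]
      _ = y1 * (R y1 * R (x * y)) := by rw [mul_assoc]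
      _ = y1 * R y1 := by rw [hB1]
      _ = y1 := dr2 y1
  -- part (ii) for y
  have hiiy : y1 = D y1 * (y * R (x * y)) := by
    rw [← mul_assoc, ← hy, hy1R]
  -- part (i) for y
  have hiy := lem (D y1) (y * R (x * y)) (projD y1)
  rw [← hiiy] at hiy
  exact ⟨⟨⟨hix.1.symm, hix.2.symm⟩, hiix⟩, ⟨⟨hiy.1.symm, hiy.2.symm⟩, hiiy⟩⟩
end

section
/- If C is an ample partial category and one defines the pseudoproduct x⊗y = x'∘y' where x' ≤ x, y' ≤ y are the largest such that x'∘y' exists, then (C, ⊗) is a semigroup (the pseudoproduct is associative). -/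
/-- An object-free (small) partial category: a set with a partial binary
operation (encoded via `Option`) and domain/range operations. -/
structure PartialCat (C : Type*) where
  comp : C → C → Option C
  D : C → C
  R : C → C
  pc1a : ∀ x : C, comp (D x) x = some x
  pc1b : ∀ x : C, comp x (R x) = some x
  pc2 : ∀ x y z : C, comp x y = some z → R x = D y
  /-- partial semigroup: `x∘(y∘z)` is defined iff `(x∘y)∘z` is, and then they agree. -/
  pc3 : ∀ x y z : C,
    (comp x y).bind (fun w => comp w z) = (comp y z).bind (fun w => comp x w)

/-- A (small, object-free) category: a partial category where `x∘y` exists iff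
`R(x) = D(y)`. -/
structure SmallCat (C : Type*) extends PartialCat C where
  total : ∀ x y : C, R x = D y → (comp x y).isSome

/-- An ample partial category. -/
structure AmplePartialCat (C : Type*) extends PartialCat C where
  le : C → C → Prop
  le_refl : ∀ x : C, le x x
  le_antisymm : ∀ x y : C, le x y → le y x → x = y
  le_trans : ∀ x y z : C, le x y → le y z → le x z
  comp_mono : ∀ s1 s2 t1 t2 u v : C, le s1 s2 → le t1 t2 →
    comp s1 t1 = some u → comp s2 t2 = some v → le u v
  D_mono : ∀ x y : C, le x y → le (D x) (D y)
  R_mono : ∀ x y : C, le x y → le (R x) (R y)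
  largest : ∀ x y : C, ∃ x' y' : C, le x' x ∧ le y' y ∧ (comp x' y').isSome ∧
    ∀ x'' y'' : C, le x'' x → le y'' y → (comp x'' y'').isSome → le x'' x' ∧ le y'' y'
  le_D_eq : ∀ x y : C, le x y → D x = D y → x = y
  le_R_eq : ∀ x y : C, le x y → R x = R y → x = y
  below : ∀ x y z w : C, comp x y = some z → le w z →
    ∃ x' y' : C, le x' x ∧ le y' y ∧ comp x' y' = some w

/-- `m` is a pseudoproduct operation for `A`: `m x y = x'∘y'` where
`x' ≤ x`, `y' ≤ y` are the largest such that `x'∘y'` exists. -/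
def IsPseudoproduct {C : Type*} (A : AmplePartialCat C) (m : C → C → C) : Prop :=
  ∀ x y : C, ∃ x' y' : C, A.le x' x ∧ A.le y' y ∧
    A.comp x' y' = some (m x y) ∧
    ∀ x'' y'' : C, A.le x'' x → A.le y'' y → (A.comp x'' y'').isSome →
      A.le x'' x' ∧ A.le y'' y'


lemma PartialCat.reassoc_left {C : Type*} (P : PartialCat C) {x y z w v : C}
    (hxy : P.comp x y = some w) (hwz : P.comp w z = some v) :
    ∃ u, P.comp y z = some u ∧ P.comp x u = some v := by
  have h := P.pc3 x y z
  rw [hxy] at h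
  simp only [Option.bind_some] at h
  rw [hwz] at h
  cases hyz : P.comp y z with
  | none => rw [hyz] at h; simp at h
  | some u => rw [hyz] at h; exact ⟨u, rfl, h.symm⟩

lemma PartialCat.reassoc_right {C : Type*} (P : PartialCat C) {x y z u v : C}
    (hyz : P.comp y z = some u) (hxu : P.comp x u = some v) :
    ∃ w, P.comp x y = some w ∧ P.comp w z = some v := by
  have h := P.pc3 x y z
  rw [hyz] at h
  simp only [Option.bind_some] at h
  rw [hxu] at h
  cases hxy : P.comp x y with
  | none => rw [hxy] at h; simp at h
  | some w => rw [hxy] at h; exact ⟨w, rfl, h⟩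

theorem stmt_19 {C : Type*} (A : AmplePartialCat C) (m : C → C → C)
    (hm : IsPseudoproduct A m) : ∀ a b c : C, m (m a b) c = m a (m b c) := by
  intro a b c
  obtain ⟨a₁, b₁, ha₁, hb₁, hab, habmax⟩ := hm a b
  obtain ⟨b₃, c₃, hb₃, hc₃, hbc, hbcmax⟩ := hm b c
  obtain ⟨p, c₁, hp, hc₁, hL, hLmax⟩ := hm (m a b) c
  obtain ⟨a₃, q, ha₃, hq, hR, hRmax⟩ := hm a (m b c)
  obtain ⟨a₂, b₂, ha₂, hb₂, hpeq⟩ := A.below a₁ b₁ (m a b) p hab hp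
  obtain ⟨b₄, c₄, hb₄, hc₄, hqeq⟩ := A.below b₃ c₃ (m b c) q hbc hq
  have ha₂a : A.le a₂ a := A.le_trans _ _ _ ha₂ ha₁
  have hb₂b : A.le b₂ b := A.le_trans _ _ _ hb₂ hb₁
  have hb₄b : A.le b₄ b := A.le_trans _ _ _ hb₄ hb₃
  have hc₄c : A.le c₄ c := A.le_trans _ _ _ hc₄ hc₃
  -- LHS ≤ RHS
  obtain ⟨u, hbc', hau⟩ := A.toPartialCat.reassoc_left hpeq hL
  have hmax1 := hbcmax b₂ c₁ hb₂b hc₁ (by rw [hbc']; rfl)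
  have hu : A.le u (m b c) :=
    A.comp_mono b₂ b₃ c₁ c₃ u (m b c) hmax1.1 hmax1.2 hbc' hbc
  have hmax2 := hRmax a₂ u ha₂a hu (by rw [hau]; rfl)
  have h1 : A.le (m (m a b) c) (m a (m b c)) :=
    A.comp_mono a₂ a₃ u q _ _ hmax2.1 hmax2.2 hau hR
  -- RHS ≤ LHS
  obtain ⟨w, hab', hwc⟩ := A.toPartialCat.reassoc_right hqeq hR
  have hmax3 := habmax a₃ b₄ ha₃ hb₄b (by rw [hab']; rfl)
  have hw : A.le w (m a b) :=
    A.comp_mono a₃ a₁ b₄ b₁ w (m a b) hmax3.1 hmax3.2 hab' hab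
  have hmax4 := hLmax w c₄ hw hc₄c (by rw [hwc]; rfl)
  have h2 : A.le (m a (m b c)) (m (m a b) c) :=
    A.comp_mono w p c₄ c₁ _ _ hmax4.1 hmax4.2 hwc hL
  exact A.le_antisymm _ _ h1 h2
end
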